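/- For every history H, H satisfies SI if and only if H ⊨ Int and there exists a directed labeled graph compatible with the hyper-polygraph of H whose induced SI graph is acyclic. -/
import Mathlib


namespace DBIso

/-! ### Operations, transactions and histories -/

/-- An operation: a read `R(x,v)` or a write `W(x,v)` on key `x` with value `v`. -/
inductive Op (Key Val : Type) where
  | read  (k : Key) (v : Val)
  | write (k : Key) (v : Val)

variable {Key Val : Type}

/-- The key accessed by an operation. -/
def Op.key : Op Key Val → Key
  | .read k _ => k
  | .write k _ => k

/-- The value read or written by an operation. -/
def Op.val : Op Key Val → Val
  | .read _ w => w
  | .write _ w => w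

/-- A transaction: a finite nonempty set of (identified) operations together with
a strict total order on them (the program order), modelled as a nonempty list of
operations tagged by pairwise distinct operation identifiers; the list order is
the program order `po`. -/
structure Txn (Key Val : Type) where
  ops : List (ℕ × Op Key Val)
  ops_nonempty : ops ≠ []
  ids_nodup : (ops.map Prod.fst).Nodup

/-- The operation of `T` at position `i` (in program order). -/
def Txn.opAt (T : Txn Key Val) (i : Fin T.ops.length) : Op Key Val :=
  (T.ops.get i).2

/-- `T ⊢ W(x,v)`: `T` writes to key `x` and `v` is the po-last value it writes to `x`. -/
def Txn.FWrites (T : Txn Key Val) (x : Key) (v : Val) : Prop :=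
  ∃ i : Fin T.ops.length, T.opAt i = Op.write x v ∧
    ∀ j : Fin T.ops.length, i < j → ∀ w : Val, T.opAt j ≠ Op.write x w

/-- `T ∈ WriteTx_x` : `T` writes to key `x`. -/
def Txn.WritesKey (T : Txn Key Val) (x : Key) : Prop :=
  ∃ v : Val, T.FWrites x v

/-- `T ⊢ R(x,v)`: `T` reads `x` before writing to it and `v` is the value returned
by the po-first such read (equivalently, the po-first operation of `T` on `x` is a
read returning `v`). -/
def Txn.FReads (T : Txn Key Val) (x : Key) (v : Val) : Prop :=
  ∃ i : Fin T.ops.length, T.opAt i = Op.read x v ∧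
    ∀ j : Fin T.ops.length, j < i → (T.opAt j).key ≠ x

/-- Internal consistency of a transaction: every read of a key `x` that is po-preceded
by an operation on `x` returns the value of the po-latest preceding operation on `x`. -/
def Txn.Internal (T : Txn Key Val) : Prop :=
  ∀ i j : Fin T.ops.length, j < i → ∀ (x : Key) (v : Val),
    T.opAt i = Op.read x v → (T.opAt j).key = x →
    (∀ k : Fin T.ops.length, j < k → k < i → (T.opAt k).key ≠ x) →
    (T.opAt j).val = v

/-- A history: a finite set of transactions with pairwise disjoint operation sets,
together with the session order `SO` (a union of strict total orders on the disjoint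
subsets, given by `sess`, partitioning the transactions), and a distinguished initial
transaction `init` (`T_⊥`) writing to every key and `SO`-preceding every other
transaction. -/
structure History (Key Val : Type) where
  txns : Set (Txn Key Val)
  txns_finite : txns.Finite
  SO : Txn Key Val → Txn Key Val → Prop
  sess : Txn Key Val → ℕ
  init : Txn Key Val
  ops_disjoint : ∀ T ∈ txns, ∀ S ∈ txns, T ≠ S →
      ∀ i ∈ T.ops.map Prod.fst, i ∉ S.ops.map Prod.fst
  so_mem : ∀ T S, SO T S → T ∈ txns ∧ S ∈ txns
  so_irrefl : ∀ T, ¬ SO T T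
  so_trans : ∀ T S U, SO T S → SO S U → SO T U
  so_total_sess : ∀ T ∈ txns, ∀ S ∈ txns, T ≠ S → sess T = sess S → SO T S ∨ SO S T
  so_sess : ∀ T S, SO T S → sess T = sess S ∨ T = init
  init_mem : init ∈ txns
  init_writes : ∀ x : Key, ∃ v : Val, init.FWrites x v
  init_so : ∀ T ∈ txns, T ≠ init → SO init T

/-- `H ⊨ Int`: every transaction of `H` is internally consistent. -/
def History.SatInt (H : History Key Val) : Prop :=
  ∀ T ∈ H.txns, T.Internal

/-- `r` is a strict total order on the set `s`. -/
def IsStrictTotalOrderOn {α : Type*} (s : Set α) (r : α → α → Prop) : Prop :=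
  (∀ a b, r a b → a ∈ s ∧ b ∈ s) ∧
  (∀ a, ¬ r a a) ∧
  (∀ a b c, r a b → r b c → r a c) ∧
  (∀ a ∈ s, ∀ b ∈ s, a ≠ b → r a b ∨ r b a)

/-- `H` satisfies SER: `H ⊨ Int` and there is a strict total order `co` on the
transactions of `H` extending `SO` such that every read `S ⊢ R(x,v)` reads the
value written by the `co`-greatest `co`-predecessor of `S` writing `x`. -/
def History.SatSER (H : History Key Val) : Prop :=
  H.SatInt ∧
  ∃ co : Txn Key Val → Txn Key Val → Prop,
    IsStrictTotalOrderOn H.txns co ∧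
    (∀ T S, H.SO T S → co T S) ∧
    ∀ S ∈ H.txns, ∀ (x : Key) (v : Val), S.FReads x v →
      ∃ T', co T' S ∧ T'.WritesKey x ∧
        (∀ T, co T S → T.WritesKey x → T = T' ∨ co T T') ∧
        T'.FWrites x v

/-! ### Dependency graphs -/

/-- `(WR, WW, RW)` extend the history `H` to a dependency graph. -/
def IsDepGraph (H : History Key Val)
    (WR WW RW : Key → Txn Key Val → Txn Key Val → Prop) : Prop :=
  (∀ (x : Key) (T S : Txn Key Val), WR x T S → T ∈ H.txns ∧ S ∈ H.txns) ∧
  (∀ x : Key, ∀ S ∈ H.txns, (∃ v, S.FReads x v) → ∃! T, WR x T S) ∧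
  (∀ (x : Key) (T S : Txn Key Val), WR x T S →
      T ≠ S ∧ ∃ v, T.FWrites x v ∧ S.FReads x v) ∧
  (∀ x : Key, IsStrictTotalOrderOn {T | T ∈ H.txns ∧ T.WritesKey x} (WW x)) ∧
  (∀ (x : Key) (T S : Txn Key Val),
      RW x T S ↔ T ≠ S ∧ ∃ T', WR x T' T ∧ WW x T' S)

/-- A binary relation is acyclic iff its transitive closure is irreflexive. -/
def RelAcyclic {α : Type*} (r : α → α → Prop) : Prop :=
  ∀ a, ¬ Relation.TransGen r a a

/-- The union `SO ∪ WR ∪ WW ∪ RW` as a binary relation on transactions. -/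
def DepUnion (H : History Key Val)
    (WR WW RW : Key → Txn Key Val → Txn Key Val → Prop) :
    Txn Key Val → Txn Key Val → Prop :=
  fun T S => H.SO T S ∨ (∃ x, WR x T S) ∨ (∃ x, WW x T S) ∨ (∃ x, RW x T S)

/-- The relation `(SO ∪ WR ∪ WW) ; RW?`. -/
def SIRel (H : History Key Val)
    (WR WW RW : Key → Txn Key Val → Txn Key Val → Prop) :
    Txn Key Val → Txn Key Val → Prop :=
  fun T S => ∃ U, (H.SO T U ∨ (∃ x, WR x T U) ∨ (∃ x, WW x T U)) ∧
    (U = S ∨ ∃ x, RW x U S)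

/-- `H` satisfies SI: `H ⊨ Int` and there exist `WR, WW, RW` extending `H` to a
dependency graph with `(SO ∪ WR ∪ WW) ; RW?` acyclic. -/
def History.SatSI (H : History Key Val) : Prop :=
  H.SatInt ∧ ∃ WR WW RW, IsDepGraph H WR WW RW ∧ RelAcyclic (SIRel H WR WW RW)

/-! ### Labeled edges and hyper-polygraphs -/

/-- Dependency edge labels. -/
inductive DepLbl (Key : Type) where
  | SO
  | WR (x : Key)
  | WW (x : Key)
  | RW (x : Key)

/-- A directed labeled edge. -/
structure LEdge (V L : Type) where
  src : V
  dst : V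
  lbl : L

variable {V L : Type}

abbrev DepEdge (V Key : Type) := LEdge V (DepLbl Key)
abbrev DepEdgeSet (V Key : Type) := Set (DepEdge V Key)

/-- There is an edge of `E` from `a` to `b`. -/
def EStep (E : Set (LEdge V L)) (a b : V) : Prop := ∃ l, LEdge.mk a b l ∈ E

/-- A set of labeled edges is cyclic iff some vertex has a nonempty edge path to itself. -/
def EdgeCyclic (E : Set (LEdge V L)) : Prop := ∃ a, Relation.TransGen (EStep E) a a

/-- `a ⤳ b`: there is a (possibly empty) edge path of `E` from `a` to `b`. -/
def EReach (E : Set (LEdge V L)) (a b : V) : Prop := Relation.ReflTransGen (EStep E) a b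

/-- A hyper-polygraph over the vertex type `V`: a known edge set `E` together with
the constraint collections `C^WW` and `C^WR`. -/
structure HyperPolygraph (V Key : Type) where
  E : DepEdgeSet V Key
  CWW : Set (DepEdgeSet V Key)
  CWR : Set (DepEdgeSet V Key)

/-- A directed labeled graph (given by its edge set `E'` over the same vertex set)
is compatible with the hyper-polygraph `G`. -/
def Compatible (G : HyperPolygraph V Key) (E' : DepEdgeSet V Key) : Prop :=
  G.E ⊆ E' ∧
  (∀ (x : Key) (T T' S : V), T ≠ S →
      LEdge.mk T' T (DepLbl.WR x) ∈ E' → LEdge.mk T' S (DepLbl.WW x) ∈ E' →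
      LEdge.mk T S (DepLbl.RW x) ∈ E') ∧
  (∀ C ∈ G.CWW ∪ G.CWR, ∃! e, e ∈ E' ∧ e ∈ C)

/-- A hyper-polygraph is SER-acyclic iff some acyclic graph is compatible with it. -/
def SERAcyclic (G : HyperPolygraph V Key) : Prop :=
  ∃ E', Compatible G E' ∧ ¬ EdgeCyclic E'

/-- The vertex set of the hyper-polygraph of a history: its transactions. -/
abbrev History.Vert (H : History Key Val) : Type := {T : Txn Key Val // T ∈ H.txns}

/-- The hyper-polygraph of a history `H`. -/
def History.hpg (H : History Key Val) : HyperPolygraph H.Vert Key where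
  E := {e | (e.lbl = DepLbl.SO ∧ H.SO e.src.1 e.dst.1) ∨
        (∃ (x : Key) (v : Val), e.lbl = DepLbl.WR x ∧
          e.dst.1.FReads x v ∧ e.src.1.FWrites x v ∧ e.src ≠ e.dst ∧
          (∀ T : H.Vert, T.1.FWrites x v → T ≠ e.dst → T = e.src))}
  CWW := {C | ∃ (x : Key) (T S : H.Vert), T ≠ S ∧
        T.1.WritesKey x ∧ S.1.WritesKey x ∧
        C = {LEdge.mk T S (DepLbl.WW x), LEdge.mk S T (DepLbl.WW x)}}
  CWR := {C | ∃ (x : Key) (S : H.Vert) (v : Val), S.1.FReads x v ∧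
        C = {e | ∃ T : H.Vert, T.1.FWrites x v ∧ T ≠ S ∧ e = LEdge.mk T S (DepLbl.WR x)}}

/-- The induced SI graph of a directed labeled graph:
`(E'_SO ∪ E'_WR ∪ E'_WW) ; (E'_RW)?`. -/
def InducedSI (E' : DepEdgeSet V Key) : V → V → Prop :=
  fun a b => ∃ c : V,
    (LEdge.mk a c DepLbl.SO ∈ E' ∨ (∃ x, LEdge.mk a c (DepLbl.WR x) ∈ E') ∨
      (∃ x, LEdge.mk a c (DepLbl.WW x) ∈ E')) ∧
    (c = b ∨ ∃ x, LEdge.mk c b (DepLbl.RW x) ∈ E')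

/-! ### Commit-order hyper-polygraphs -/

/-- Labels for commit-order hyper-polygraphs. -/
inductive COLbl (Key : Type) where
  | SO
  | WR (x : Key)
  | CO

abbrev COEdge (V Key : Type) := LEdge V (COLbl Key)

/-- A commit-order hyper-polygraph. -/
structure COHyperPolygraph (V Key : Type) where
  E : Set (COEdge V Key)
  CCO : Set (Set (COEdge V Key))
  CWR : Set (Set (COEdge V Key))

/-- The commit-order hyper-polygraph of a history `H`. -/
def History.cohpg (H : History Key Val) : COHyperPolygraph H.Vert Key where
  E := {e | (e.lbl = COLbl.SO ∧ H.SO e.src.1 e.dst.1) ∨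
        (∃ (x : Key) (v : Val), e.lbl = COLbl.WR x ∧
          e.dst.1.FReads x v ∧ e.src.1.FWrites x v ∧ e.src ≠ e.dst ∧
          (∀ T : H.Vert, T.1.FWrites x v → T ≠ e.dst → T = e.src))}
  CCO := {C | ∃ T S : H.Vert, T ≠ S ∧
        C = {LEdge.mk T S COLbl.CO, LEdge.mk S T COLbl.CO}}
  CWR := {C | ∃ (x : Key) (S : H.Vert) (v : Val), S.1.FReads x v ∧
        C = {e | ∃ T : H.Vert, T.1.FWrites x v ∧ T ≠ S ∧ e = LEdge.mk T S (COLbl.WR x)}}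

/-- A directed labeled graph (given by its edge set `E'`) is SER-compatible with the
commit-order hyper-polygraph of the history `H`. -/
def SERCompatible (H : History Key Val) (E' : Set (COEdge H.Vert Key)) : Prop :=
  H.cohpg.E ⊆ E' ∧
  (∀ C ∈ H.cohpg.CCO ∪ H.cohpg.CWR, ∃! e, e ∈ E' ∧ e ∈ C) ∧
  (∀ (x : Key) (T₁ T₂ T₃ : H.Vert), T₁ ≠ T₂ →
      LEdge.mk T₁ T₃ (COLbl.WR x) ∈ E' → T₂.1.WritesKey x →
      LEdge.mk T₂ T₃ COLbl.CO ∈ E' → LEdge.mk T₂ T₁ COLbl.CO ∈ E')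

/-- The read-from conditions of a dependency graph on a family `WR`. -/
def ReadFromConds (H : History Key Val)
    (WR : Key → Txn Key Val → Txn Key Val → Prop) : Prop :=
  (∀ (x : Key) (T S : Txn Key Val), WR x T S → T ∈ H.txns ∧ S ∈ H.txns) ∧
  (∀ x : Key, ∀ S ∈ H.txns, (∃ v, S.FReads x v) → ∃! T, WR x T S) ∧
  (∀ (x : Key) (T S : Txn Key Val), WR x T S →
      T ≠ S ∧ ∃ v, T.FWrites x v ∧ S.FReads x v)

/-! ### The pruning transition system -/

/-- `{(S,T',RW,x) : (T,S,WR,x) ∈ E, S ≠ T'}`: the RW edges derived from the WW edge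
`(T,T',WW,x)` and the WR edges of `E`. -/
def DerivedRWofWW (E : DepEdgeSet V Key) (T T' : V) (x : Key) : DepEdgeSet V Key :=
  {e | ∃ S : V, LEdge.mk T S (DepLbl.WR x) ∈ E ∧ S ≠ T' ∧
      e = LEdge.mk S T' (DepLbl.RW x)}

/-- `{(S,T',RW,x) : (T,T',WW,x) ∈ E, S ≠ T'}`: the RW edges derived from the WR edge
`(T,S,WR,x)` and the WW edges of `E`. -/
def DerivedRWofWR (E : DepEdgeSet V Key) (T S : V) (x : Key) : DepEdgeSet V Key :=
  {e | ∃ T' : V, LEdge.mk T T' (DepLbl.WW x) ∈ E ∧ S ≠ T' ∧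
      e = LEdge.mk S T' (DepLbl.RW x)}

/-- States of the pruning transition system: a triple `⟨E, C^WW, C^WR⟩` or the
terminal state `S#` (`bad`). -/
inductive PState (V Key : Type) where
  | node (E : DepEdgeSet V Key) (CWW CWR : Set (DepEdgeSet V Key)) : PState V Key
  | bad : PState V Key

/-- The pruning transition relation `↪`. -/
inductive PruneStep : PState V Key → PState V Key → Prop where
  | noChoice {E : DepEdgeSet V Key} {CWW CWR : Set (DepEdgeSet V Key)}
      (h : (∅ : DepEdgeSet V Key) ∈ CWW ∪ CWR) :
      PruneStep (.node E CWW CWR) .bad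
  | cyc {E : DepEdgeSet V Key} {CWW CWR : Set (DepEdgeSet V Key)}
      (h : EdgeCyclic E) :
      PruneStep (.node E CWW CWR) .bad
  | wwElim {E : DepEdgeSet V Key} {CWW CWR : Set (DepEdgeSet V Key)}
      {cons : DepEdgeSet V Key} {T T' : V} {x : Key}
      (hc : cons ∈ CWW) (he : LEdge.mk T T' (DepLbl.WW x) ∈ cons)
      (hcyc : EdgeCyclic (E ∪ {LEdge.mk T T' (DepLbl.WW x)} ∪ DerivedRWofWW E T T' x)) :
      PruneStep (.node E CWW CWR)
        (.node E ((CWW \ {cons}) ∪ {cons \ {LEdge.mk T T' (DepLbl.WW x)}}) CWR)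
  | wrElim {E : DepEdgeSet V Key} {CWW CWR : Set (DepEdgeSet V Key)}
      {cons : DepEdgeSet V Key} {T S : V} {x : Key}
      (hc : cons ∈ CWR) (he : LEdge.mk T S (DepLbl.WR x) ∈ cons)
      (hcyc : EdgeCyclic (E ∪ {LEdge.mk T S (DepLbl.WR x)} ∪ DerivedRWofWR E T S x)) :
      PruneStep (.node E CWW CWR)
        (.node E CWW ((CWR \ {cons}) ∪ {cons \ {LEdge.mk T S (DepLbl.WR x)}}))
  | wwIntro {E : DepEdgeSet V Key} {CWW CWR : Set (DepEdgeSet V Key)}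
      {T T' : V} {x : Key}
      (hc : ({LEdge.mk T T' (DepLbl.WW x)} : DepEdgeSet V Key) ∈ CWW) :
      PruneStep (.node E CWW CWR)
        (.node (E ∪ {LEdge.mk T T' (DepLbl.WW x)} ∪ DerivedRWofWW E T T' x)
          (CWW \ {{LEdge.mk T T' (DepLbl.WW x)}}) CWR)
  | wrIntro {E : DepEdgeSet V Key} {CWW CWR : Set (DepEdgeSet V Key)}
      {T S : V} {x : Key}
      (hc : ({LEdge.mk T S (DepLbl.WR x)} : DepEdgeSet V Key) ∈ CWR) :
      PruneStep (.node E CWW CWR)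
        (.node (E ∪ {LEdge.mk T S (DepLbl.WR x)} ∪ DerivedRWofWR E T S x)
          CWW (CWR \ {{LEdge.mk T S (DepLbl.WR x)}}))

/-! ### Boolean encoding -/

/-- The edges occurring in some constraint of `G` (i.e. the edges carrying a
Boolean variable, besides the RW variables). -/
def ConsEdges (G : HyperPolygraph V Key) : DepEdgeSet V Key :=
  ⋃₀ (G.CWW ∪ G.CWR)

/-- The truth value, under the assignment `α`, of the literal associated with an
edge: the constant true if the edge lies in `G.E`, and its variable's value
otherwise. -/
def EdgeVal (G : HyperPolygraph V Key) (α : DepEdge V Key → Prop)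
    (e : DepEdge V Key) : Prop :=
  e ∈ G.E ∨ α e

/-- `α` satisfies the Boolean encoding `Φ_G` of the hyper-polygraph `G`. -/
def SatPhi (G : HyperPolygraph V Key) (α : DepEdge V Key → Prop) : Prop :=
  (∀ C ∈ G.CWW ∪ G.CWR, ∃ e ∈ C, α e) ∧
  (∀ C ∈ G.CWW ∪ G.CWR, ∀ e ∈ C, ∀ e' ∈ C, e ≠ e' → ¬(α e ∧ α e')) ∧
  (∀ (x : Key) (T T' S : V), S ≠ T' →
      (LEdge.mk T T' (DepLbl.WW x) ∈ G.E ∨ LEdge.mk T T' (DepLbl.WW x) ∈ ConsEdges G) →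
      (LEdge.mk T S (DepLbl.WR x) ∈ G.E ∨ LEdge.mk T S (DepLbl.WR x) ∈ ConsEdges G) →
      EdgeVal G α (LEdge.mk T T' (DepLbl.WW x)) →
      EdgeVal G α (LEdge.mk T S (DepLbl.WR x)) →
      α (LEdge.mk S T' (DepLbl.RW x)))

/-- The graph induced by the assignment `α`: `G.E` together with all constraint
edges and RW edges whose variables `α` sets to true. -/
def InducedOf (G : HyperPolygraph V Key) (α : DepEdge V Key → Prop) :
    DepEdgeSet V Key :=
  G.E ∪ {e | e ∈ ConsEdges G ∧ α e} ∪
    {e | (∃ (x : Key) (S T' : V), S ≠ T' ∧ e = LEdge.mk S T' (DepLbl.RW x)) ∧ α e}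

/-- `α` satisfies all 2-width-cycle clauses of `G`. -/
def SatPairClauses (G : HyperPolygraph V Key) (α : DepEdge V Key → Prop) : Prop :=
  (∀ e₁ e₂ : DepEdge V Key, e₁ ∈ ConsEdges G → e₂ ∈ ConsEdges G → e₁ ≠ e₂ →
      EReach G.E e₁.dst e₂.src → EReach G.E e₂.dst e₁.src → ¬(α e₁ ∧ α e₂)) ∧
  (∀ (x : Key) (T T' S : V), T' ≠ T → T' ≠ S → EReach G.E T' S →
      LEdge.mk T T' (DepLbl.WW x) ∈ ConsEdges G →
      LEdge.mk T S (DepLbl.WR x) ∈ ConsEdges G →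
      ¬(α (LEdge.mk T T' (DepLbl.WW x)) ∧ α (LEdge.mk T S (DepLbl.WR x))))

/-! ### Auxiliary lemmas for the main theorem -/

/-- The value of the po-first read of a key is unique. -/
lemma Txn.freads_val_unique {T : Txn Key Val} {x : Key} {v v' : Val}
    (h : T.FReads x v) (h' : T.FReads x v') : v = v' := by
  obtain ⟨i, hi, hmin⟩ := h
  obtain ⟨i', hi', hmin'⟩ := h'
  rcases lt_trichotomy i i' with hlt | heq | hgt
  · exact absurd (by rw [hi]; rfl) (hmin' i hlt)
  · cases heq
    rw [hi] at hi'
    injection hi' with _ h2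
  · exact absurd (by rw [hi']; rfl) (hmin i' hgt)

/-- Lifting a transitive path along a relation whose steps lift to (paths in) a
relation on a subtype. -/
lemma transGen_lift_mem {α : Type*} {s : Set α} {r : α → α → Prop}
    {q : {a // a ∈ s} → {a // a ∈ s} → Prop}
    (h : ∀ a b, r a b → ∃ (ha : a ∈ s) (hb : b ∈ s), Relation.TransGen q ⟨a, ha⟩ ⟨b, hb⟩)
    {a b : α} (hr : Relation.TransGen r a b) :
    ∃ (ha : a ∈ s) (hb : b ∈ s), Relation.TransGen q ⟨a, ha⟩ ⟨b, hb⟩ := by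
  induction hr with
  | single h1 => exact h _ _ h1
  | tail _ h1 ih =>
    obtain ⟨ha, hb, p1⟩ := ih
    obtain ⟨hb', hc, p2⟩ := h _ _ h1
    exact ⟨ha, hc, p1.trans p2⟩

/-- The single-WW-edge relation of a graph `E'`, on underlying transactions. -/
abbrev wwwRel (H : History Key Val) (E' : DepEdgeSet H.Vert Key)
    (x : Key) (T S : Txn Key Val) : Prop :=
  ∃ (hT : T ∈ H.txns) (hS : S ∈ H.txns), T.WritesKey x ∧ S.WritesKey x ∧
    (⟨⟨T, hT⟩, ⟨S, hS⟩, DepLbl.WW x⟩ : DepEdge H.Vert Key) ∈ E'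

/-- The WW relation extracted from a graph `E'`: the transitive closure of the
single-WW-edge relation. -/
abbrev WWRel (H : History Key Val) (E' : DepEdgeSet H.Vert Key)
    (x : Key) : Txn Key Val → Txn Key Val → Prop :=
  Relation.TransGen (wwwRel H E' x)

/-- The WR relation extracted from a graph `E'`. -/
abbrev WRRel (H : History Key Val) (E' : DepEdgeSet H.Vert Key)
    (x : Key) (T S : Txn Key Val) : Prop :=
  ∃ (hT : T ∈ H.txns) (hS : S ∈ H.txns) (v : Val),
    T.FWrites x v ∧ S.FReads x v ∧ T ≠ S ∧
    (⟨⟨T, hT⟩, ⟨S, hS⟩, DepLbl.WR x⟩ : DepEdge H.Vert Key) ∈ E'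

/-- The RW relation extracted from a graph `E'`. -/
abbrev RWRel (H : History Key Val) (E' : DepEdgeSet H.Vert Key)
    (x : Key) (T S : Txn Key Val) : Prop :=
  T ≠ S ∧ ∃ T', WRRel H E' x T' T ∧ WWRel H E' x T' S

/-- Theorem (SI via hyper-polygraphs): `H` satisfies SI iff `H ⊨ Int` and there
exists a directed labeled graph compatible with the hyper-polygraph of `H`
whose induced SI graph is acyclic. -/
theorem si_iff_exists_compatible_with_acyclic_induced_si (Key Val : Type)
    (H : History Key Val) :
    H.SatSI ↔
      H.SatInt ∧ ∃ E' : DepEdgeSet H.Vert Key,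
        Compatible H.hpg E' ∧ RelAcyclic (InducedSI E') := by
  constructor
  · -- forward direction
    rintro ⟨hInt, WR, WW, RW, ⟨hWRmem, hWRuniq, hWRprop, hWWsto, hRWiff⟩, hAcyc⟩
    refine ⟨hInt, ?_⟩
    set E' : DepEdgeSet H.Vert Key := {e | (e.lbl = DepLbl.SO ∧ H.SO e.src.1 e.dst.1) ∨
      (∃ x, e.lbl = DepLbl.WR x ∧ WR x e.src.1 e.dst.1) ∨
      (∃ x, e.lbl = DepLbl.WW x ∧ WW x e.src.1 e.dst.1) ∨
      (∃ x, e.lbl = DepLbl.RW x ∧ RW x e.src.1 e.dst.1)} with hE'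
    have eSO : ∀ a b : H.Vert,
        (⟨a, b, DepLbl.SO⟩ : DepEdge H.Vert Key) ∈ E' ↔ H.SO a.1 b.1 := by
      intro a b
      rw [hE']
      constructor
      · rintro (⟨_, h⟩ | ⟨x, hx, _⟩ | ⟨x, hx, _⟩ | ⟨x, hx, _⟩)
        · exact h
        all_goals cases hx
      · intro h; exact Or.inl ⟨rfl, h⟩
    have eWR : ∀ (x : Key) (a b : H.Vert),
        (⟨a, b, DepLbl.WR x⟩ : DepEdge H.Vert Key) ∈ E' ↔ WR x a.1 b.1 := by
      intro x a b
      rw [hE']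
      constructor
      · rintro (⟨h, _⟩ | ⟨y, hy, h⟩ | ⟨y, hy, _⟩ | ⟨y, hy, _⟩)
        · cases h
        · cases hy; exact h
        all_goals cases hy
      · intro h; exact Or.inr (Or.inl ⟨x, rfl, h⟩)
    have eWW : ∀ (x : Key) (a b : H.Vert),
        (⟨a, b, DepLbl.WW x⟩ : DepEdge H.Vert Key) ∈ E' ↔ WW x a.1 b.1 := by
      intro x a b
      rw [hE']
      constructor
      · rintro (⟨h, _⟩ | ⟨y, hy, _⟩ | ⟨y, hy, h⟩ | ⟨y, hy, _⟩)
        · cases h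
        · cases hy
        · cases hy; exact h
        · cases hy
      · intro h; exact Or.inr (Or.inr (Or.inl ⟨x, rfl, h⟩))
    have eRW : ∀ (x : Key) (a b : H.Vert),
        (⟨a, b, DepLbl.RW x⟩ : DepEdge H.Vert Key) ∈ E' ↔ RW x a.1 b.1 := by
      intro x a b
      rw [hE']
      constructor
      · rintro (⟨h, _⟩ | ⟨y, hy, _⟩ | ⟨y, hy, _⟩ | ⟨y, hy, h⟩)
        · cases h
        · cases hy
        · cases hy
        · cases hy; exact h
      · intro h; exact Or.inr (Or.inr (Or.inr ⟨x, rfl, h⟩))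
    refine ⟨E', ⟨?_, ?_, ?_⟩, ?_⟩
    · -- hpg.E ⊆ E'
      intro e he
      rcases he with ⟨hlbl, hso⟩ | ⟨x, v, hlbl, hread, hwrite, hne, hforced⟩
      · exact Or.inl ⟨hlbl, hso⟩
      · refine Or.inr (Or.inl ⟨x, hlbl, ?_⟩)
        obtain ⟨T, hT, huniq⟩ := hWRuniq x e.dst.1 e.dst.2 ⟨v, hread⟩
        obtain ⟨hTne, v', hwv', hrv'⟩ := hWRprop x T e.dst.1 hT
        have hv : v' = v := Txn.freads_val_unique hrv' hread
        have hTmem : T ∈ H.txns := (hWRmem x T e.dst.1 hT).1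
        have hsrc : (⟨T, hTmem⟩ : H.Vert) = e.src := by
          apply hforced
          · rw [hv] at hwv'; exact hwv'
          · intro hEq; exact hTne (congrArg Subtype.val hEq)
        have hTs : T = e.src.1 := congrArg Subtype.val hsrc
        rwa [hTs] at hT
    · -- RW closure
      intro x T T' S hTS h1 h2
      refine (eRW x T S).mpr ?_
      exact (hRWiff x T.1 S.1).mpr
        ⟨fun h => hTS (Subtype.ext h), T'.1, (eWR x T' T).mp h1, (eWW x T' S).mp h2⟩
    · -- constraints
      intro C hC
      rcases hC with hC | hC
      · obtain ⟨x, T, S, hne, hTw, hSw, rfl⟩ := hC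
        obtain ⟨_, hirr, htr, htot⟩ := hWWsto x
        have hne' : T.1 ≠ S.1 := fun h => hne (Subtype.ext h)
        have hnotboth : ¬ (WW x T.1 S.1 ∧ WW x S.1 T.1) :=
          fun ⟨h1, h2⟩ => hirr T.1 (htr _ _ _ h1 h2)
        rcases htot T.1 ⟨T.2, hTw⟩ S.1 ⟨S.2, hSw⟩ hne' with h | h
        · refine ⟨⟨T, S, DepLbl.WW x⟩, ⟨(eWW x T S).mpr h, Set.mem_insert _ _⟩, ?_⟩
          rintro e ⟨heE, heC⟩
          simp only [Set.mem_insert_iff, Set.mem_singleton_iff] at heC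
          rcases heC with rfl | rfl
          · rfl
          · exact absurd ⟨h, (eWW x S T).mp heE⟩ hnotboth
        · refine ⟨⟨S, T, DepLbl.WW x⟩,
            ⟨(eWW x S T).mpr h, Set.mem_insert_of_mem _ rfl⟩, ?_⟩
          rintro e ⟨heE, heC⟩
          simp only [Set.mem_insert_iff, Set.mem_singleton_iff] at heC
          rcases heC with rfl | rfl
          · exact absurd ⟨(eWW x T S).mp heE, h⟩ hnotboth
          · rfl
      · obtain ⟨x, S, v, hrv, rfl⟩ := hC
        obtain ⟨T, hT, huniq⟩ := hWRuniq x S.1 S.2 ⟨v, hrv⟩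
        obtain ⟨hTne, v', hwv', hrv'⟩ := hWRprop x T S.1 hT
        have hv : v' = v := Txn.freads_val_unique hrv' hrv
        have hTmem : T ∈ H.txns := (hWRmem x T S.1 hT).1
        refine ⟨⟨⟨T, hTmem⟩, S, DepLbl.WR x⟩, ⟨(eWR x ⟨T, hTmem⟩ S).mpr hT, ?_⟩, ?_⟩
        · exact ⟨⟨T, hTmem⟩, hv ▸ hwv', fun h => hTne (congrArg Subtype.val h), rfl⟩
        · rintro e ⟨heE, T'', hw'', hne'', rfl⟩
          have hWReq : T''.1 = T := huniq T''.1 ((eWR x T'' S).mp heE)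
          have : T'' = (⟨T, hTmem⟩ : H.Vert) := Subtype.ext hWReq
          rw [this]
    · -- acyclicity
      have step : ∀ a b : H.Vert, InducedSI E' a b → SIRel H WR WW RW a.1 b.1 := by
        rintro a b ⟨c, hbase, hrw⟩
        refine ⟨c.1, ?_, ?_⟩
        · rcases hbase with h | ⟨x, h⟩ | ⟨x, h⟩
          · exact Or.inl ((eSO a c).mp h)
          · exact Or.inr (Or.inl ⟨x, (eWR x a c).mp h⟩)
          · exact Or.inr (Or.inr ⟨x, (eWW x a c).mp h⟩)
        · rcases hrw with rfl | ⟨x, h⟩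
          · exact Or.inl rfl
          · exact Or.inr ⟨x, (eRW x c b).mp h⟩
      intro a hc
      exact hAcyc a.1 (hc.lift Subtype.val step)
  · -- reverse direction
    rintro ⟨hInt, E', ⟨hEsub, hclose, hcons⟩, hAcyc⟩
    refine ⟨hInt, ?_⟩
    have wwwStep : ∀ (x : Key) (T S : Txn Key Val), wwwRel H E' x T S →
        ∃ (hT : T ∈ H.txns) (hS : S ∈ H.txns), InducedSI E' ⟨T, hT⟩ ⟨S, hS⟩ := by
      rintro x T S ⟨hT, hS, _, _, he⟩
      exact ⟨hT, hS, ⟨⟨S, hS⟩, Or.inr (Or.inr ⟨x, he⟩), Or.inl rfl⟩⟩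
    have wwwLift : ∀ (x : Key) (T S : Txn Key Val), WWRel H E' x T S →
        ∃ (hT : T ∈ H.txns) (hS : S ∈ H.txns),
          Relation.TransGen (InducedSI E') ⟨T, hT⟩ ⟨S, hS⟩ := by
      intro x T S h
      refine transGen_lift_mem (fun a b hab => ?_) h
      obtain ⟨ha, hb, hstep⟩ := wwwStep x a b hab
      exact ⟨ha, hb, Relation.TransGen.single hstep⟩
    refine ⟨WRRel H E', WWRel H E', RWRel H E', ⟨?_, ?_, ?_, ?_, ?_⟩, ?_⟩
    · rintro x T S ⟨hT, hS, -⟩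
      exact ⟨hT, hS⟩
    · -- uniqueness of WR
      rintro x S hS ⟨v, hv⟩
      have hC : {e | ∃ T : H.Vert, T.1.FWrites x v ∧ T ≠ ⟨S, hS⟩ ∧
          e = ⟨T, ⟨S, hS⟩, DepLbl.WR x⟩} ∈ H.hpg.CWW ∪ H.hpg.CWR :=
        Set.mem_union_right _ ⟨x, ⟨S, hS⟩, v, hv, rfl⟩
      obtain ⟨e, ⟨heE, heC⟩, huniq⟩ := hcons _ hC
      obtain ⟨Tv, hw, hne, rfl⟩ := heC
      refine ⟨Tv.1, ⟨Tv.2, hS, v, hw, hv, fun h => hne (Subtype.ext h), heE⟩, ?_⟩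
      rintro T' ⟨hT', hS', v', hw', hr', hne', he'⟩
      have hv' : v' = v := Txn.freads_val_unique hr' hv
      have hEdgeEq : (⟨⟨T', hT'⟩, ⟨S, hS⟩, DepLbl.WR x⟩ : DepEdge H.Vert Key)
          = ⟨Tv, ⟨S, hS⟩, DepLbl.WR x⟩ := by
        apply huniq
        exact ⟨he', ⟨T', hT'⟩, hv' ▸ hw',
          fun h => hne' (congrArg Subtype.val h), rfl⟩
      exact congrArg (fun e => e.src.1) hEdgeEq
    · rintro x T S ⟨hT, hS, v, hw, hr, hne, he⟩
      exact ⟨hne, v, hw, hr⟩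
    · -- WW is a strict total order on writers
      intro x
      refine ⟨?_, ?_, fun a b c h1 h2 => h1.trans h2, ?_⟩
      · intro a b hab
        induction hab with
        | single h =>
          obtain ⟨hT, hS, hw1, hw2, -⟩ := h
          exact ⟨⟨hT, hw1⟩, ⟨hS, hw2⟩⟩
        | tail _ h ih =>
          obtain ⟨hT, hS, hw1, hw2, -⟩ := h
          exact ⟨ih.1, ⟨hS, hw2⟩⟩
      · intro a ha
        obtain ⟨h1, h2, hp⟩ := wwwLift x a a ha
        exact hAcyc ⟨a, h1⟩ hp
      · rintro a ⟨haT, haW⟩ b ⟨hbT, hbW⟩ hne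
        have hC : ({⟨⟨a, haT⟩, ⟨b, hbT⟩, DepLbl.WW x⟩,
            ⟨⟨b, hbT⟩, ⟨a, haT⟩, DepLbl.WW x⟩} : DepEdgeSet H.Vert Key)
            ∈ H.hpg.CWW ∪ H.hpg.CWR :=
          Set.mem_union_left _
            ⟨x, ⟨a, haT⟩, ⟨b, hbT⟩, fun h => hne (congrArg Subtype.val h), haW, hbW, rfl⟩
        obtain ⟨e, ⟨heE, heC⟩, -⟩ := hcons _ hC
        simp only [Set.mem_insert_iff, Set.mem_singleton_iff] at heC
        rcases heC with rfl | rfl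
        · exact Or.inl (Relation.TransGen.single ⟨haT, hbT, haW, hbW, heE⟩)
        · exact Or.inr (Relation.TransGen.single ⟨hbT, haT, hbW, haW, heE⟩)
    · intro x T S
      exact Iff.rfl
    · -- acyclicity of SIRel
      have glue : ∀ {a b c d : H.Vert},
          (a = b ∨ Relation.TransGen (InducedSI E') a b) →
          InducedSI E' b c → (c = d ∨ Relation.TransGen (InducedSI E') c d) →
          Relation.TransGen (InducedSI E') a d := by
        rintro a b c d (rfl | h1) h2 (rfl | h3)
        · exact Relation.TransGen.single h2
        · exact Relation.TransGen.head h2 h3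
        · exact h1.tail h2
        · exact (h1.tail h2).trans h3
      have main : ∀ T S : Txn Key Val,
          SIRel H (WRRel H E') (WWRel H E') (RWRel H E') T S →
          ∃ (hT : T ∈ H.txns) (hS : S ∈ H.txns),
            Relation.TransGen (InducedSI E') ⟨T, hT⟩ ⟨S, hS⟩ := by
        rintro T S ⟨U, hbase, hrw⟩
        obtain ⟨hT, hU, W, hW, hpre, hedge⟩ :
            ∃ (hT : T ∈ H.txns) (hU : U ∈ H.txns) (W : Txn Key Val) (hW : W ∈ H.txns),
              ((⟨T, hT⟩ : H.Vert) = ⟨W, hW⟩ ∨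
                Relation.TransGen (InducedSI E') ⟨T, hT⟩ ⟨W, hW⟩) ∧
              ((⟨⟨W, hW⟩, ⟨U, hU⟩, DepLbl.SO⟩ : DepEdge H.Vert Key) ∈ E' ∨
                (∃ x, (⟨⟨W, hW⟩, ⟨U, hU⟩, DepLbl.WR x⟩ : DepEdge H.Vert Key) ∈ E') ∨
                (∃ x, (⟨⟨W, hW⟩, ⟨U, hU⟩, DepLbl.WW x⟩ : DepEdge H.Vert Key) ∈ E')) := by
          rcases hbase with hso | ⟨x, hwr⟩ | ⟨x, hww⟩
          · obtain ⟨hT, hU⟩ := H.so_mem T U hso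
            exact ⟨hT, hU, T, hT, Or.inl rfl, Or.inl (hEsub (Or.inl ⟨rfl, hso⟩))⟩
          · obtain ⟨hT, hU, v, hw, hr, hne, he⟩ := hwr
            exact ⟨hT, hU, T, hT, Or.inl rfl, Or.inr (Or.inl ⟨x, he⟩)⟩
          · obtain ⟨W, hpre, hlast⟩ := Relation.TransGen.tail'_iff.mp hww
            obtain ⟨hW, hU, -, -, he⟩ := hlast
            rcases Relation.reflTransGen_iff_eq_or_transGen.mp hpre with heq | htg
            · subst heq
              exact ⟨hW, hU, W, hW, Or.inl rfl, Or.inr (Or.inr ⟨x, he⟩)⟩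
            · obtain ⟨hT, hW', hp⟩ := wwwLift x T W htg
              exact ⟨hT, hU, W, hW, Or.inr hp, Or.inr (Or.inr ⟨x, he⟩)⟩
        rcases hrw with rfl | ⟨x, hne, T', hwr', hww'⟩
        · exact ⟨hT, hU, glue hpre ⟨⟨U, hU⟩, hedge, Or.inl rfl⟩ (Or.inl rfl)⟩
        · obtain ⟨hT'm, hUm, v, hwv, hrv, hneTU, hewr⟩ := hwr'
          obtain ⟨V, hfirst, hrest⟩ := Relation.TransGen.head'_iff.mp hww'
          obtain ⟨hT'm2, hV, hwT', hwV, heww⟩ := hfirst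
          obtain ⟨hS, hsuf⟩ : ∃ (hS : S ∈ H.txns),
              ((⟨V, hV⟩ : H.Vert) = ⟨S, hS⟩ ∨
                Relation.TransGen (InducedSI E') ⟨V, hV⟩ ⟨S, hS⟩) := by
            rcases Relation.reflTransGen_iff_eq_or_transGen.mp hrest with heq | htg
            · subst heq
              exact ⟨hV, Or.inl rfl⟩
            · obtain ⟨hV', hS, hp⟩ := wwwLift x V S htg
              exact ⟨hS, Or.inr hp⟩
          by_cases hUV : U = V
          · subst hUV
            exact ⟨hT, hS, glue hpre ⟨⟨U, hU⟩, hedge, Or.inl rfl⟩ hsuf⟩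
          · have herw : (⟨⟨U, hU⟩, ⟨V, hV⟩, DepLbl.RW x⟩ : DepEdge H.Vert Key) ∈ E' := by
              refine hclose x ⟨U, hU⟩ ⟨T', hT'm⟩ ⟨V, hV⟩
                (fun h => hUV (congrArg Subtype.val h)) ?_ ?_
              · exact hewr
              · exact heww
            exact ⟨hT, hS, glue hpre ⟨⟨U, hU⟩, hedge, Or.inr ⟨x, herw⟩⟩ hsuf⟩
      intro a hcyc
      obtain ⟨h1, h2, hp⟩ := transGen_lift_mem main hcyc
      exact hAcyc ⟨a, h1⟩ hp

end DBIso
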